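/- The graph 5C_4^= (the 4-cycle with every edge given multiplicity 5, minus a perfect matching) is strongly Z_7-connected: every Z_7-boundary is achieved by some orientation. -/

import Mathlib

/-- The direction of edge `i` under orientation `o`: if `o i = true` the
reference direction is reversed. -/
def edir {V : Type} {m : ℕ} (ends : Fin m → V × V) (o : Fin m → Bool) (i : Fin m) : V × V :=
  if o i then ((ends i).2, (ends i).1) else ends i

/-- Contribution of edge `i` to `d⁺ - d⁻` at vertex `v`, computed in `ZMod n`. -/
def contrib {V : Type} [DecidableEq V] {m : ℕ} (n : ℕ) (ends : Fin m → V × V)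
    (o : Fin m → Bool) (i : Fin m) (v : V) : ZMod n :=
  (if (edir ends o i).1 = v then 1 else 0) - (if (edir ends o i).2 = v then 1 else 0)

/-- `d⁺_D(v) - d⁻_D(v)` in `ZMod n` for the orientation `o` of the multigraph
with edge-endpoint function `ends`. -/
def netDeg {V : Type} [DecidableEq V] {m : ℕ} (n : ℕ) (ends : Fin m → V × V)
    (o : Fin m → Bool) (v : V) : ZMod n :=
  ∑ i : Fin m, contrib n ends o i v

def fiveC4eq : Fin 18 → Fin 4 × Fin 4 :=
  ![(0, 1), (0, 1), (0, 1), (0, 1),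
    (1, 2), (1, 2), (1, 2), (1, 2), (1, 2),
    (2, 3), (2, 3), (2, 3), (2, 3),
    (3, 0), (3, 0), (3, 0), (3, 0), (3, 0)]

/-!
Reversing `j` of `k` parallel edges `u → w` leaves a net flow `k - 2j` from `u` to `w`, so in
`ZMod 7` a bundle of five edges carries any nonzero flow and a bundle of four edges any flow
but `±1`. The boundary at a vertex of the cycle `0 → 1 → 2 → 3 → 0` is its outgoing minus its
incoming flow; taking the flows `s - β 1, s, s + β 2, s + β 2 + β 3` on the four sides meets
the boundary at `1, 2, 3`, and at `0` because `∑ β = 0`. These flows are realisable unless `s`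
hits one of `1 + 2 + 2 + 1 = 6` forbidden residues, which leaves one of the seven.
-/

section Bundles

variable {V : Type} [DecidableEq V] (n : ℕ)

def netFlow {k : ℕ} (o : Fin k → Bool) : ZMod n :=
  ∑ i, if o i then -1 else 1

lemma netDeg_append {k l : ℕ} (e₁ : Fin k → V × V) (e₂ : Fin l → V × V)
    (o₁ : Fin k → Bool) (o₂ : Fin l → Bool) (v : V) :
    netDeg n (Fin.append e₁ e₂) (Fin.append o₁ o₂) v = netDeg n e₁ o₁ v + netDeg n e₂ o₂ v := by
  simp only [netDeg, Fin.sum_univ_add, contrib, edir, Fin.append_left, Fin.append_right]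
  rfl

lemma netDeg_const_ends {k : ℕ} (u w : V) (o : Fin k → Bool) (v : V) :
    netDeg n (fun _ => (u, w)) o v =
      netFlow n o * ((if u = v then 1 else 0) - (if w = v then 1 else 0)) := by
  rw [netDeg, netFlow, Finset.sum_mul]
  refine Finset.sum_congr rfl fun i _ => ?_
  cases h : o i <;> simp [contrib, edir, h]

lemma netFlow_decide_lt {k j : ℕ} (hj : j ≤ k) :
    netFlow n (fun i : Fin k => decide (i.val < j)) = k - 2 * j := by
  have h : ∀ i : Fin k, (if decide (i.val < j) then (-1 : ZMod n) else 1)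
      = 1 - 2 * if i.val < j then 1 else 0 := fun i => by split_ifs <;> simp_all; ring
  simp only [netFlow, h, Finset.sum_sub_distrib, ← Finset.mul_sum, Finset.sum_boole,
    Fin.card_filter_val_lt, min_eq_right hj]
  simp

end Bundles

lemma exists_netFlow_eq_of_ne_zero (t : ZMod 7) (ht : t ≠ 0) :
    ∃ o : Fin 5 → Bool, netFlow 7 o = t := by
  obtain ⟨j, hj⟩ : ∃ j : Fin 6, (5 : ZMod 7) - 2 * j.val = t := by revert t; decide
  exact ⟨_, (netFlow_decide_lt 7 (Nat.lt_succ_iff.mp j.isLt)).trans (by simpa using hj)⟩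

lemma exists_netFlow_eq_of_ne_one_of_ne_neg_one (t : ZMod 7) (ht : t ≠ 1 ∧ t ≠ -1) :
    ∃ o : Fin 4 → Bool, netFlow 7 o = t := by
  obtain ⟨j, hj⟩ : ∃ j : Fin 5, (4 : ZMod 7) - 2 * j.val = t := by revert t; decide
  exact ⟨_, (netFlow_decide_lt 7 (Nat.lt_succ_iff.mp j.isLt)).trans (by simpa using hj)⟩

lemma fiveC4eq_eq_append : fiveC4eq = Fin.append (Fin.append (Fin.append
    (fun _ : Fin 4 => ((0 : Fin 4), (1 : Fin 4))) (fun _ : Fin 5 => (1, 2)))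
    (fun _ : Fin 4 => (2, 3))) (fun _ : Fin 5 => (3, 0)) := by
  decide

lemma exists_avoiding_six (b₁ b₂ b₃ : ZMod 7) :
    ∃ s : ZMod 7, s ≠ 0 ∧ (s - b₁ ≠ 1 ∧ s - b₁ ≠ -1) ∧ (s + b₂ ≠ 1 ∧ s + b₂ ≠ -1) ∧
      s + b₂ + b₃ ≠ 0 := by
  let F : Finset (ZMod 7) := {0, b₁ + 1, b₁ - 1, 1 - b₂, -1 - b₂, -b₂ - b₃}
  have hF : F.card < (Finset.univ : Finset (ZMod 7)).card :=
    (Finset.card_le_six).trans_lt (by simp)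
  obtain ⟨s, -, hs⟩ := Finset.exists_mem_notMem_of_card_lt_card hF
  simp only [F, Finset.mem_insert, Finset.mem_singleton, not_or] at hs
  obtain ⟨h0, h1, h2, h3, h4, h5⟩ := hs
  refine ⟨s, h0, ⟨fun h => h1 ?_, fun h => h2 ?_⟩, ⟨fun h => h3 ?_, fun h => h4 ?_⟩,
    fun h => h5 ?_⟩ <;> linear_combination h

lemma netDeg_fiveC4eq_append (x : Fin 4 → Bool) (y : Fin 5 → Bool) (z : Fin 4 → Bool)
    (w : Fin 5 → Bool) :
    let o : Fin 18 → Bool := Fin.append (Fin.append (Fin.append x y) z) w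
    netDeg 7 fiveC4eq o 0 = netFlow 7 x - netFlow 7 w ∧
      netDeg 7 fiveC4eq o 1 = netFlow 7 y - netFlow 7 x ∧
      netDeg 7 fiveC4eq o 2 = netFlow 7 z - netFlow 7 y ∧
      netDeg 7 fiveC4eq o 3 = netFlow 7 w - netFlow 7 z := by
  refine ⟨?_, ?_, ?_, ?_⟩ <;>
  · rw [fiveC4eq_eq_append, netDeg_append (k := 4 + 5 + 4), netDeg_append (k := 4 + 5),
      netDeg_append (k := 4), netDeg_const_ends, netDeg_const_ends, netDeg_const_ends,
      netDeg_const_ends]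
    simp [sub_eq_add_neg, add_comm]

theorem fiveC4eq_strongly_Z7_connected (β : Fin 4 → ZMod 7) (hβ : ∑ v : Fin 4, β v = 0) :
    ∃ o : Fin 18 → Bool, ∀ v : Fin 4, netDeg 7 fiveC4eq o v = β v := by
  obtain ⟨s, h₁₂, h₀₁, h₂₃, h₃₀⟩ := exists_avoiding_six (β 1) (β 2) (β 3)
  obtain ⟨x, hx⟩ := exists_netFlow_eq_of_ne_one_of_ne_neg_one _ h₀₁
  obtain ⟨y, hy⟩ := exists_netFlow_eq_of_ne_zero _ h₁₂
  obtain ⟨z, hz⟩ := exists_netFlow_eq_of_ne_one_of_ne_neg_one _ h₂₃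
  obtain ⟨w, hw⟩ := exists_netFlow_eq_of_ne_zero _ h₃₀
  obtain ⟨e₀, e₁, e₂, e₃⟩ := netDeg_fiveC4eq_append x y z w
  refine ⟨Fin.append (Fin.append (Fin.append x y) z) w, fun v => ?_⟩
  rw [Fin.sum_univ_four] at hβ
  fin_cases v <;> simp only [Fin.reduceFinMk, Fin.isValue]
  · rw [e₀, hx, hw]; linear_combination -hβ
  · rw [e₁, hy, hx]; ring
  · rw [e₂, hz, hy]; ring
  · rw [e₃, hw, hz]; ring
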